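/- arXiv:1405.5096 — 4 statements merged into one kernel-verified Lean document; each statement's English description precedes it below -/
import Mathlib

section
/- Let (Z_t) for t ≥ n₀ be independent random variables with values in [0,B], let (B_t) be a {0,1}-valued predictable sequence (B_t is measurable with respect to the σ-algebra generated by Z_s, s ≤ t−1), let S_n = Σ_{t=n₀}^n B_t(Z_t − E[Z_t]) and t_n = Σ_{t=n₀}^n B_t. Let φ ∈ {n₀,…,T+1} be a stopping time such that on the event φ ≤ T one has t_φ ≥ s. Then P[S_φ ≥ t_φ·δ and φ ≤ T] ≤ exp(−2sδ²/B²). -/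
/-!
Put `λ = 4δ/B²` and `c = λ²B²/8`; Hoeffding's lemma gives `E[exp(λ(Z_t - E Z_t) - c)] ≤ 1`.
Replacing `B_t` by the stopped selection `1{t ≤ φ} B_t`, which is still predictable, the process
`exp(λ S_{n∧φ} - c t_{n∧φ})` has expectation at most `1` for every `n`: from `n - 1` to `n` it is
multiplied by a convex combination of `1` and `exp(λ(Z_n - E Z_n) - c)` whose weights are
independent of `Z_n`. On the event in question
`λ S_φ - c t_φ ≥ (λδ - c) t_φ = 2δ² t_φ / B² ≥ 2sδ²/B²`, and Markov's inequality concludes.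
-/

open MeasureTheory ProbabilityTheory Real
open scoped ENNReal NNReal

lemma Real.exp_mul_le_one_sub_add_mul_exp {a : ℝ} (ha : a ∈ Set.Icc (0 : ℝ) 1) (y : ℝ) :
    exp (a * y) ≤ 1 - a + a * exp y := by
  simpa using convexOn_exp.2 (Set.mem_univ 0) (Set.mem_univ y) (sub_nonneg.2 ha.2) ha.1 (by ring)

section

variable {Ω : Type*} {mΩ : MeasurableSpace Ω}

lemma MeasureTheory.IsStoppingTime.measurableSet_ge_sub_one {𝓕 : Filtration ℤ mΩ} {φ : Ω → ℤ}
    (hφ : IsStoppingTime 𝓕 fun ω ↦ (φ ω : WithTop ℤ)) (t : ℤ) :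
    MeasurableSet[𝓕 (t - 1)] {ω | t ≤ φ ω} := by
  convert hφ.measurableSet_gt (t - 1) using 2
  ext ω
  exact (WithTop.coe_lt_coe.trans Int.sub_one_lt_iff).symm

lemma Finset.sum_Icc_ite_le_of_le {α M : Type*} [Preorder α] [LocallyFiniteOrder α]
    [AddCommMonoid M] {a b c : α} [DecidablePred (· ≤ c)] (h : c ≤ b) (f : α → M) :
    ∑ x ∈ Icc a b, (if x ≤ c then f x else 0) = ∑ x ∈ Icc a c, f x := by
  rw [← sum_filter]
  congr 1
  ext x
  simp only [mem_filter, mem_Icc]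
  exact ⟨fun hx ↦ ⟨hx.1.1, hx.2⟩, fun hx ↦ ⟨⟨hx.1, hx.2.trans h⟩, hx.2⟩⟩

lemma two_mul_mul_sq_div_sq_le {B δ s τ S : ℝ} (hδ : 0 ≤ δ) (hs : s ≤ τ) (hS : τ * δ ≤ S) :
    2 * s * δ ^ 2 / B ^ 2 ≤ 4 * δ / B ^ 2 * S - (4 * δ / B ^ 2) ^ 2 * B ^ 2 / 8 * τ := by
  have hc : (4 * δ / B ^ 2) ^ 2 * B ^ 2 / 8 = 2 * δ ^ 2 / B ^ 2 := by
    rcases eq_or_ne B 0 with rfl | hB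
    · simp
    · field_simp
      ring
  rw [hc]
  calc 2 * s * δ ^ 2 / B ^ 2 = 2 * δ ^ 2 / B ^ 2 * s := by ring
    _ ≤ 2 * δ ^ 2 / B ^ 2 * τ := by gcongr
    _ = 4 * δ / B ^ 2 * (τ * δ) - 2 * δ ^ 2 / B ^ 2 * τ := by ring
    _ ≤ 4 * δ / B ^ 2 * S - 2 * δ ^ 2 / B ^ 2 * τ := by gcongr

variable {P : Measure Ω}

lemma lintegral_ofReal_mul_exp_mul_le {M W Y : Ω → ℝ} (hM : Measurable M) (hM0 : 0 ≤ M)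
    (hW : Measurable W) (hW01 : ∀ ω, W ω ∈ Set.Icc 0 1) (hY : Measurable Y)
    (hindep : IndepFun (M * W) Y P) (hYexp : ∫⁻ ω, ENNReal.ofReal (exp (Y ω)) ∂P ≤ 1) :
    ∫⁻ ω, ENNReal.ofReal (M ω * exp (W ω * Y ω)) ∂P ≤ ∫⁻ ω, ENNReal.ofReal (M ω) ∂P := by
  have hMW0 : ∀ ω, 0 ≤ M ω * W ω := fun ω ↦ mul_nonneg (hM0 ω) (hW01 ω).1
  have hMW'0 : ∀ ω, 0 ≤ M ω * (1 - W ω) := fun ω ↦ mul_nonneg (hM0 ω) (sub_nonneg.2 (hW01 ω).2)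
  have hsplit : ∀ ω, ENNReal.ofReal (M ω * exp (W ω * Y ω)) ≤ ENNReal.ofReal (M ω * (1 - W ω))
      + ENNReal.ofReal (M ω * W ω) * ENNReal.ofReal (exp (Y ω)) := fun ω ↦ by
    rw [← ENNReal.ofReal_mul (hMW0 ω), ← ENNReal.ofReal_add (hMW'0 ω)
      (mul_nonneg (hMW0 ω) (exp_pos _).le)]
    gcongr
    calc M ω * exp (W ω * Y ω) ≤ M ω * (1 - W ω + W ω * exp (Y ω)) :=
          mul_le_mul_of_nonneg_left (exp_mul_le_one_sub_add_mul_exp (hW01 ω) _) (hM0 ω)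
      _ = M ω * (1 - W ω) + M ω * W ω * exp (Y ω) := by ring
  calc ∫⁻ ω, ENNReal.ofReal (M ω * exp (W ω * Y ω)) ∂P
      ≤ ∫⁻ ω, ENNReal.ofReal (M ω * (1 - W ω))
          + ENNReal.ofReal (M ω * W ω) * ENNReal.ofReal (exp (Y ω)) ∂P := lintegral_mono hsplit
    _ = ∫⁻ ω, ENNReal.ofReal (M ω * (1 - W ω)) ∂P
          + (∫⁻ ω, ENNReal.ofReal (M ω * W ω) ∂P) * ∫⁻ ω, ENNReal.ofReal (exp (Y ω)) ∂P := by
      rw [lintegral_add_left (by fun_prop)]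
      exact congrArg _ (lintegral_mul_eq_lintegral_mul_lintegral_of_indepFun (by fun_prop)
        (by fun_prop) (hindep.comp ENNReal.measurable_ofReal (measurable_exp.ennreal_ofReal)))
    _ ≤ ∫⁻ ω, ENNReal.ofReal (M ω * (1 - W ω)) ∂P + ∫⁻ ω, ENNReal.ofReal (M ω * W ω) ∂P := by
      gcongr
      exact mul_le_of_le_one_right' hYexp
    _ = ∫⁻ ω, ENNReal.ofReal (M ω) ∂P := by
      rw [← lintegral_add_left (by fun_prop)]
      refine lintegral_congr fun ω ↦ ?_
      rw [← ENNReal.ofReal_add (hMW'0 ω) (hMW0 ω), ← mul_add, sub_add_cancel, mul_one]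

lemma measure_le_ofReal_exp_neg_of_lintegral_exp_le_one {X : Ω → ℝ}
    (hX : AEMeasurable X P) (h : ∫⁻ ω, ENNReal.ofReal (exp (X ω)) ∂P ≤ 1) (K : ℝ) :
    P {ω | K ≤ X ω} ≤ ENNReal.ofReal (exp (-K)) := by
  have hK : ENNReal.ofReal (exp K) ≠ 0 := by simpa using exp_pos K
  calc P {ω | K ≤ X ω} = P {ω | ENNReal.ofReal (exp K) ≤ ENNReal.ofReal (exp (X ω))} := by
        simp_rw [ENNReal.ofReal_le_ofReal_iff (exp_pos _).le, exp_le_exp]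
    _ ≤ (∫⁻ ω, ENNReal.ofReal (exp (X ω)) ∂P) / ENNReal.ofReal (exp K) :=
        meas_ge_le_lintegral_div (by fun_prop) hK ENNReal.ofReal_ne_top
    _ ≤ 1 / ENNReal.ofReal (exp K) := by gcongr
    _ = ENNReal.ofReal (exp (-K)) := by
        rw [one_div, ← ENNReal.ofReal_inv_of_pos (exp_pos K), exp_neg]

lemma lintegral_exp_mul_sub_integral_le_one_of_mem_Icc [IsProbabilityMeasure P] {X : Ω → ℝ}
    {a b : ℝ} (hXm : AEMeasurable X P) (hXb : ∀ᵐ ω ∂P, X ω ∈ Set.Icc a b) (l : ℝ) :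
    ∫⁻ ω, ENNReal.ofReal (exp (l * (X ω - P[X]) - l ^ 2 * (b - a) ^ 2 / 8)) ∂P ≤ 1 := by
  have hX := hasSubgaussianMGF_of_mem_Icc hXm hXb
  have hc : (((‖b - a‖₊ / 2) ^ 2 : ℝ≥0) : ℝ) * l ^ 2 / 2 = l ^ 2 * (b - a) ^ 2 / 8 := by
    push_cast
    rw [Real.norm_eq_abs, div_pow, sq_abs]
    ring
  calc ∫⁻ ω, ENNReal.ofReal (exp (l * (X ω - P[X]) - l ^ 2 * (b - a) ^ 2 / 8)) ∂P
      = ENNReal.ofReal (mgf (fun ω ↦ X ω - P[X]) P l * exp (-(l ^ 2 * (b - a) ^ 2 / 8))) := by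
        rw [mgf, ← integral_mul_const, ofReal_integral_eq_lintegral_ofReal
          ((hX.integrable_exp_mul l).mul_const _) (ae_of_all _ fun ω ↦ by positivity)]
        simp_rw [← exp_add, sub_eq_add_neg]
    _ ≤ ENNReal.ofReal (exp (l ^ 2 * (b - a) ^ 2 / 8) * exp (-(l ^ 2 * (b - a) ^ 2 / 8))) := by
        gcongr
        exact hc ▸ hX.mgf_le l
    _ = 1 := by rw [← exp_add, add_neg_cancel, exp_zero, ENNReal.ofReal_one]

section NaturalFiltration

variable {ι β : Type*} [Preorder ι] [TopologicalSpace β] [TopologicalSpace.MetrizableSpace β]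
  [MeasurableSpace β] [BorelSpace β] {Z : ι → Ω → β} (hZm : ∀ i, StronglyMeasurable (Z i))

lemma ProbabilityTheory.iIndepFun.indepFun_of_measurable_natural {γ : Type*} [MeasurableSpace γ]
    (hindep : iIndepFun Z P) {H : Ω → γ} {i j : ι}
    (hH : Measurable[Filtration.natural Z hZm i] H) (hij : ¬ j ≤ i) : IndepFun H (Z j) P := by
  rw [IndepFun_iff_Indep]
  have h := indep_iSup_of_disjoint (fun k ↦ (hZm k).measurable.comap_le) hindep.iIndep
    (S := {k | k ≤ i}) (T := {j}) (Set.disjoint_singleton_right.2 hij)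
  rw [iSup_singleton] at h
  exact indep_of_indep_of_le_left h hH.comap_le

end NaturalFiltration

section Predictable

variable {Z : ℤ → Ω → ℝ} (hZm : ∀ t, StronglyMeasurable (Z t)) {A : ℤ → Ω → ℝ}

lemma measurable_natural_sum_mul_comp
    (hAm : ∀ t, Measurable[Filtration.natural Z hZm (t - 1)] (A t)) {f : ℤ → ℝ → ℝ}
    (hf : ∀ t, Measurable (f t)) (n₀ n : ℤ) :
    Measurable[Filtration.natural Z hZm n] fun ω ↦ ∑ t ∈ Finset.Icc n₀ n, A t ω * f t (Z t ω) := by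
  refine Finset.measurable_sum _ fun t ht ↦ ?_
  have htn : t ≤ n := (Finset.mem_Icc.1 ht).2
  exact ((hAm t).mono (Filtration.mono _ (by omega)) le_rfl).mul
    ((hf t).comp (((Filtration.stronglyAdapted_natural hZm t).measurable).mono
      (Filtration.mono _ htn) le_rfl))

theorem lintegral_exp_sum_predictable_le_one [IsProbabilityMeasure P] (hindep : iIndepFun Z P)
    {a b : ℝ} (hZb : ∀ t, ∀ᵐ ω ∂P, Z t ω ∈ Set.Icc a b) (hA : ∀ t ω, A t ω ∈ Set.Icc 0 1)
    (hAm : ∀ t, Measurable[Filtration.natural Z hZm (t - 1)] (A t)) (l : ℝ) (n₀ n : ℤ) :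
    ∫⁻ ω, ENNReal.ofReal (exp (∑ t ∈ Finset.Icc n₀ n,
      A t ω * (l * (Z t ω - P[Z t]) - l ^ 2 * (b - a) ^ 2 / 8))) ∂P ≤ 1 := by
  set f : ℤ → ℝ → ℝ := fun t z ↦ l * (z - P[Z t]) - l ^ 2 * (b - a) ^ 2 / 8
  have hf : ∀ t, Measurable (f t) := fun t ↦ by fun_prop
  set M : ℤ → Ω → ℝ := fun n ω ↦ exp (∑ t ∈ Finset.Icc n₀ n, A t ω * f t (Z t ω))
  change ∫⁻ ω, ENNReal.ofReal (M n ω) ∂P ≤ 1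
  induction n using Int.inductionOn' (b := n₀ - 1) with
  | zero => simp [M]
  | pred n hn _ => simp [M, Finset.Icc_eq_empty_of_lt (show n - 1 < n₀ by omega)]
  | succ n hn ih =>
    have hMm : Measurable[Filtration.natural Z hZm n] (M n) :=
      (measurable_natural_sum_mul_comp hZm hAm hf n₀ n).exp
    have hWm : Measurable[Filtration.natural Z hZm n] (A (n + 1)) := by
      have h := hAm (n + 1)
      rwa [add_sub_cancel_right] at h
    have hM : M (n + 1) = fun ω ↦ M n ω * exp (A (n + 1) ω * f (n + 1) (Z (n + 1) ω)) := by
      ext ω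
      simp only [M]
      rw [← Finset.insert_Icc_right_eq_Icc_add_one (by omega), Finset.sum_insert (by simp),
        exp_add, mul_comm]
    rw [hM]
    refine (lintegral_ofReal_mul_exp_mul_le (hMm.mono (Filtration.le _ n) le_rfl)
      (fun ω ↦ (exp_pos _).le) (hWm.mono (Filtration.le _ n) le_rfl) (hA (n + 1))
      ((hf _).comp (hZm _).measurable) ?_ ?_).trans ih
    · exact (hindep.indepFun_of_measurable_natural hZm (i := n) (j := n + 1) (hMm.mul hWm)
        (by omega)).comp measurable_id (hf (n + 1))
    · exact lintegral_exp_mul_sub_integral_le_one_of_mem_Icc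
        (hZm (n + 1)).measurable.aemeasurable (hZb (n + 1)) l

end Predictable

end

theorem stmt_4_general {Ω : Type*} {mΩ : MeasurableSpace Ω} (P : Measure Ω) [IsProbabilityMeasure P]
    (B : ℝ) (n₀ T : ℤ) (s : ℕ) (δ : ℝ) (hδ : 0 < δ)
    (Z : ℤ → Ω → ℝ) (hZm : ∀ t, StronglyMeasurable (Z t))
    (hZb : ∀ t ω, Z t ω ∈ Set.Icc 0 B)
    (hindep : iIndepFun Z P)
    (Bsel : ℤ → Ω → ℝ) (hB01 : ∀ t ω, Bsel t ω = 0 ∨ Bsel t ω = 1)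
    (hBm : ∀ t, Measurable[(MeasureTheory.Filtration.natural Z hZm) (t - 1)] (Bsel t))
    (φ : Ω → ℤ) (hφ : IsStoppingTime (MeasureTheory.Filtration.natural Z hZm) (fun ω => (φ ω : WithTop ℤ)))
    (hφs : ∀ ω, φ ω ≤ T → (s : ℝ) ≤ ∑ t ∈ Finset.Icc n₀ (φ ω), Bsel t ω) :
    P {ω | (∑ t ∈ Finset.Icc n₀ (φ ω), Bsel t ω) * δ ≤
            ∑ t ∈ Finset.Icc n₀ (φ ω), Bsel t ω * (Z t ω - ∫ x, Z t x ∂P) ∧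
          φ ω ≤ T}
      ≤ ENNReal.ofReal (Real.exp (-2 * (s : ℝ) * δ ^ 2 / B ^ 2)) := by
  set l := 4 * δ / B ^ 2
  -- stopping the selection at `φ` keeps it predictable and turns sums up to `φ` into sums up to `T`
  set A : ℤ → Ω → ℝ := fun t ω ↦ if t ≤ φ ω then Bsel t ω else 0
  have hA : ∀ t ω, A t ω ∈ Set.Icc 0 1 := fun t ω ↦ by
    simp only [A]
    split_ifs <;> rcases hB01 t ω with h | h <;> simp [h]
  have hAm : ∀ t, Measurable[Filtration.natural Z hZm (t - 1)] (A t) := fun t ↦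
    Measurable.ite (hφ.measurableSet_ge_sub_one t) (hBm t) measurable_const
  have hX := lintegral_exp_sum_predictable_le_one hZm hindep (fun t ↦ ae_of_all _ (hZb t)) hA hAm
    l n₀ T
  have hXm := (measurable_natural_sum_mul_comp hZm hAm
    (f := fun t z ↦ l * (z - P[Z t]) - l ^ 2 * (B - 0) ^ 2 / 8) (fun t ↦ by fun_prop) n₀ T).mono
    (Filtration.le _ T) le_rfl
  refine (measure_mono fun ω hω ↦ ?_).trans ((measure_le_ofReal_exp_neg_of_lintegral_exp_le_one
    hXm.aemeasurable hX (2 * s * δ ^ 2 / B ^ 2)).trans_eq (by ring_nf))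
  obtain ⟨hS, hφT⟩ := hω
  simp only [Set.mem_ofPred_eq, A, ite_mul, zero_mul, Finset.sum_Icc_ite_le_of_le hφT, sub_zero]
  convert two_mul_mul_sq_div_sq_le hδ.le (hφs ω hφT) hS using 1
  rw [Finset.mul_sum, Finset.mul_sum, ← Finset.sum_sub_distrib]
  exact Finset.sum_congr rfl fun t _ ↦ by ring

theorem stmt_4 {Ω : Type*} {mΩ : MeasurableSpace Ω} (P : Measure Ω) [IsProbabilityMeasure P]
    (B : ℝ) (hB : 0 < B) (n₀ T : ℤ) (hT : n₀ ≤ T) (s : ℕ) (δ : ℝ) (hδ : 0 < δ)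
    (Z : ℤ → Ω → ℝ) (hZm : ∀ t, StronglyMeasurable (Z t))
    (hZb : ∀ t ω, Z t ω ∈ Set.Icc 0 B)
    (hindep : iIndepFun Z P)
    (Bsel : ℤ → Ω → ℝ) (hB01 : ∀ t ω, Bsel t ω = 0 ∨ Bsel t ω = 1)
    (hBm : ∀ t, Measurable[(MeasureTheory.Filtration.natural Z hZm) (t - 1)] (Bsel t))
    (φ : Ω → ℤ) (hφ : IsStoppingTime (MeasureTheory.Filtration.natural Z hZm) (fun ω => (φ ω : WithTop ℤ)))
    (hφr : ∀ ω, φ ω ∈ Set.Icc n₀ (T + 1))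
    (hφs : ∀ ω, φ ω ≤ T → (s : ℝ) ≤ ∑ t ∈ Finset.Icc n₀ (φ ω), Bsel t ω) :
    P {ω | (∑ t ∈ Finset.Icc n₀ (φ ω), Bsel t ω) * δ ≤
            ∑ t ∈ Finset.Icc n₀ (φ ω), Bsel t ω * (Z t ω - ∫ x, Z t x ∂P) ∧
          φ ω ≤ T}
      ≤ ENNReal.ofReal (Real.exp (-2 * (s : ℝ) * δ ^ 2 / B ^ 2)) :=
  stmt_4_general (mΩ := mΩ) P B n₀ T s δ hδ Z hZm hZb hindep Bsel hB01 hBm φ hφ hφs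
end

section
/- Under the same hypotheses as the previous statement, P[|S_φ| ≥ t_φ·δ and φ ≤ T] ≤ 2·exp(−2sδ²/B²). -/
/-!
Write `X t = Z t - E[Z t]` and `C t = Bsel t · 1{t ≤ φ}`; `C` is again predictable because `φ` is
a stopping time, and on `{φ ≤ T}` the sums up to `φ` weighted by `Bsel` are the sums over the
fixed window `[n₀, T]` weighted by `C`. By Hoeffding's lemma each `X t` is sub-Gaussian with
parameter `c = B² / 4`, and it is independent of the past, so `exp (∑ C t (l X t - c l² / 2))` is
a supermartingale and has expectation at most `1`, however many rounds are selected. On the event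
`s ≤ t_φ`, `t_φ δ ≤ S_φ`, the choice `l = δ / c` makes the exponent at least
`s δ² / (2 c) = 2 s δ² / B²`, and Markov's inequality bounds its probability by
`exp (-2 s δ² / B²)`. The same bound for `-X` and a union bound give the factor `2`.
-/

open MeasureTheory ProbabilityTheory Real
open scoped NNReal

lemma indep_natural_comap_of_not_le {Ω ι : Type*} {mΩ : MeasurableSpace Ω} [Preorder ι]
    {P : Measure Ω} {Z : ι → Ω → ℝ} (hZm : ∀ t, StronglyMeasurable (Z t))
    (hindep : iIndepFun Z P) {n m : ι} (hmn : ¬ m ≤ n) :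
    Indep (Filtration.natural Z hZm n) (MeasurableSpace.comap (Z m) inferInstance) P :=
  indep_of_indep_of_le_right
    (indep_biSup_compl (fun t => (hZm t).measurable.comap_le) hindep.iIndep (Set.Iic n))
    (le_biSup (fun j => MeasurableSpace.comap (Z j) inferInstance) hmn)

lemma exp_mul_of_eq_zero_or_eq_one {b : ℝ} (hb : b = 0 ∨ b = 1) (x : ℝ) :
    exp (b * x) = 1 - b + b * exp x := by
  rcases hb with rfl | rfl <;> simp

lemma sum_Icc_ite_le {α M : Type*} [LinearOrder α] [LocallyFiniteOrder α] [AddCommMonoid M]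
    {a m n : α} (hmn : m ≤ n) (f : α → M) :
    ∑ t ∈ Finset.Icc a n, (if t ≤ m then f t else 0) = ∑ t ∈ Finset.Icc a m, f t := by
  rw [← Finset.sum_filter]
  congr 1
  ext t
  simp only [Finset.mem_filter, Finset.mem_Icc]
  exact ⟨fun ⟨⟨hat, _⟩, htm⟩ => ⟨hat, htm⟩, fun ⟨hat, htm⟩ => ⟨⟨hat, htm.trans hmn⟩, htm⟩⟩

section CompensatedExp

variable {Ω : Type*} {mΩ : MeasurableSpace Ω} {P : Measure Ω}
  {F : Filtration ℤ mΩ} {C X : ℤ → Ω → ℝ} {c : ℝ≥0}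

noncomputable def compensatedExp (n₀ : ℤ) (c l : ℝ) (C X : ℤ → Ω → ℝ) (n : ℤ) (ω : Ω) : ℝ :=
  exp (∑ t ∈ Finset.Icc n₀ n, C t ω * (l * X t ω - c * l ^ 2 / 2))

lemma compensatedExp_add_one {n₀ n : ℤ} (hn : n₀ ≤ n + 1) (c l : ℝ) (ω : Ω) :
    compensatedExp n₀ c l C X (n + 1) ω =
      compensatedExp n₀ c l C X n ω * exp (C (n + 1) ω * (l * X (n + 1) ω - c * l ^ 2 / 2)) := by
  rw [compensatedExp, compensatedExp, ← Finset.insert_Icc_right_eq_Icc_add_one hn,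
    Finset.sum_insert (by simp), exp_add, mul_comm]

lemma measurable_compensatedExp (hXm : ∀ t, Measurable[F t] (X t))
    (hCm : ∀ t, Measurable[F (t - 1)] (C t)) (n₀ : ℤ) (c l : ℝ) (n : ℤ) :
    Measurable[F n] (compensatedExp n₀ c l C X n) := by
  refine Measurable.exp (Finset.measurable_sum _ fun t ht => ?_)
  have htn : t ≤ n := (Finset.mem_Icc.1 ht).2
  exact ((hCm t).mono (F.mono (by omega)) le_rfl).mul
    ((((hXm t).mono (F.mono htn) le_rfl).const_mul l).sub_const _)

lemma integrable_compensatedExp_add_one (hX : ∀ t, HasSubgaussianMGF (X t) c P)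
    (hXm : ∀ t, Measurable[F t] (X t))
    (hindep : ∀ n, Indep (F n) (MeasurableSpace.comap (X (n + 1)) inferInstance) P)
    (hC01 : ∀ t ω, C t ω = 0 ∨ C t ω = 1) (hCm : ∀ t, Measurable[F (t - 1)] (C t))
    {n₀ n : ℤ} (hn : n₀ ≤ n + 1) (l : ℝ) (hM : Integrable (compensatedExp n₀ c l C X n) P) :
    Integrable (compensatedExp n₀ c l C X (n + 1)) P ∧
      ∫ ω, compensatedExp n₀ c l C X (n + 1) ω ∂P ≤ ∫ ω, compensatedExp n₀ c l C X n ω ∂P := by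
  set M := compensatedExp n₀ c l C X n
  set D := C (n + 1)
  set K : ℝ := c * l ^ 2 / 2
  have hMF : Measurable[F n] M := measurable_compensatedExp hXm hCm n₀ c l n
  have hDF : Measurable[F n] D := by
    have := hCm (n + 1)
    rwa [add_sub_cancel_right] at this
  have hD : ∀ ω, ‖D ω‖ ≤ 1 := fun ω => by rcases hC01 (n + 1) ω with h | h <;> simp [D, h]
  have hD' : ∀ ω, ‖1 - D ω‖ ≤ 1 := fun ω => by rcases hC01 (n + 1) ω with h | h <;> simp [D, h]
  have hMD : Integrable (fun ω => M ω * D ω) P :=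
    hM.mul_bdd (hDF.mono (F.le n) le_rfl).aestronglyMeasurable (ae_of_all _ hD)
  have hMD' : Integrable (fun ω => M ω * (1 - D ω)) P :=
    hM.mul_bdd ((hDF.mono (F.le n) le_rfl).const_sub 1).aestronglyMeasurable (ae_of_all _ hD')
  have hind : IndepFun (fun ω => M ω * D ω) (fun ω => exp (l * X (n + 1) ω)) P := by
    rw [IndepFun_iff_Indep]
    exact indep_of_indep_of_le_right (indep_of_indep_of_le_left (hindep n) (hMF.mul hDF).comap_le)
      ((comap_measurable (X (n + 1))).const_mul l).exp.comap_le
  have hsplit : compensatedExp n₀ c l C X (n + 1) =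
      fun ω => M ω * (1 - D ω) + exp (-K) * (M ω * D ω * exp (l * X (n + 1) ω)) := by
    funext ω
    simp only [M, D, K]
    rw [compensatedExp_add_one hn, exp_mul_of_eq_zero_or_eq_one (hC01 (n + 1) ω), exp_sub, exp_neg]
    field_simp
  have hprod : Integrable (fun ω => M ω * D ω * exp (l * X (n + 1) ω)) P :=
    hind.integrable_mul hMD ((hX (n + 1)).integrable_exp_mul l)
  refine ⟨hsplit ▸ hMD'.add (hprod.const_mul _), ?_⟩
  have hmgf : ∫ ω, M ω * D ω * exp (l * X (n + 1) ω) ∂P ≤ (∫ ω, M ω * D ω ∂P) * exp K := by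
    rw [hind.integral_fun_mul_eq_mul_integral hMD.aestronglyMeasurable
      ((hX (n + 1)).integrable_exp_mul l).aestronglyMeasurable]
    exact mul_le_mul_of_nonneg_left ((hX (n + 1)).mgf_le l) (integral_nonneg fun ω =>
      mul_nonneg (exp_pos _).le (by rcases hC01 (n + 1) ω with h | h <;> simp [D, h]))
  calc ∫ ω, compensatedExp n₀ c l C X (n + 1) ω ∂P
      = ∫ ω, M ω * (1 - D ω) ∂P + exp (-K) * ∫ ω, M ω * D ω * exp (l * X (n + 1) ω) ∂P := by
        rw [hsplit, integral_add hMD' (hprod.const_mul _), integral_const_mul]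
    _ ≤ ∫ ω, M ω * (1 - D ω) ∂P + exp (-K) * ((∫ ω, M ω * D ω ∂P) * exp K) := by
        gcongr
    _ = ∫ ω, M ω ∂P := by
        rw [mul_left_comm, ← exp_add, neg_add_cancel, exp_zero, mul_one, ← integral_add hMD' hMD]
        congr 1 with ω
        ring

lemma integrable_compensatedExp_and_integral_le_one [IsProbabilityMeasure P]
    (hX : ∀ t, HasSubgaussianMGF (X t) c P) (hXm : ∀ t, Measurable[F t] (X t))
    (hindep : ∀ n, Indep (F n) (MeasurableSpace.comap (X (n + 1)) inferInstance) P)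
    (hC01 : ∀ t ω, C t ω = 0 ∨ C t ω = 1) (hCm : ∀ t, Measurable[F (t - 1)] (C t))
    (n₀ : ℤ) (l : ℝ) (n : ℤ) :
    Integrable (compensatedExp n₀ c l C X n) P ∧ ∫ ω, compensatedExp n₀ c l C X n ω ∂P ≤ 1 := by
  have hempty : ∀ m < n₀, Integrable (compensatedExp n₀ c l C X m) P ∧
      ∫ ω, compensatedExp n₀ c l C X m ω ∂P ≤ 1 := fun m hm => by
    have hone : compensatedExp n₀ c l C X m = fun _ => 1 :=
      funext fun ω => by simp [compensatedExp, Finset.Icc_eq_empty_of_lt hm]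
    simp [hone]
  rcases lt_or_ge n n₀ with hn | hn
  · exact hempty n hn
  refine Int.leInduction (hempty _ (by omega)) (fun m hm ih => ?_) n (by omega : n₀ - 1 ≤ n)
  obtain ⟨hint, hle⟩ :=
    integrable_compensatedExp_add_one hX hXm hindep hC01 hCm (by omega) l ih.1
  exact ⟨hint, hle.trans ih.2⟩

lemma measure_sum_mul_ge_le [IsProbabilityMeasure P] (hc : 0 < c)
    (hX : ∀ t, HasSubgaussianMGF (X t) c P) (hXm : ∀ t, Measurable[F t] (X t))
    (hindep : ∀ n, Indep (F n) (MeasurableSpace.comap (X (n + 1)) inferInstance) P)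
    (hC01 : ∀ t ω, C t ω = 0 ∨ C t ω = 1) (hCm : ∀ t, Measurable[F (t - 1)] (C t))
    (n₀ T : ℤ) (s : ℝ) {δ : ℝ} (hδ : 0 ≤ δ) :
    P {ω | s ≤ ∑ t ∈ Finset.Icc n₀ T, C t ω ∧
        (∑ t ∈ Finset.Icc n₀ T, C t ω) * δ ≤ ∑ t ∈ Finset.Icc n₀ T, C t ω * X t ω}
      ≤ ENNReal.ofReal (exp (-(s * δ ^ 2) / (2 * c))) := by
  have hc' : (0 : ℝ) < c := hc
  set l : ℝ := δ / c
  let Y : Ω → ℝ := fun ω => ∑ t ∈ Finset.Icc n₀ T, C t ω * (l * X t ω - c * l ^ 2 / 2)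
  obtain ⟨hint, hle⟩ := integrable_compensatedExp_and_integral_le_one hX hXm hindep hC01 hCm n₀ l T
  have hmgf : mgf Y P 1 ≤ 1 := by simpa [mgf, compensatedExp] using hle
  -- `l = δ / c` maximises `l δ - c l² / 2`
  have hsub : {ω | s ≤ ∑ t ∈ Finset.Icc n₀ T, C t ω ∧
      (∑ t ∈ Finset.Icc n₀ T, C t ω) * δ ≤ ∑ t ∈ Finset.Icc n₀ T, C t ω * X t ω}
      ⊆ {ω | s * δ ^ 2 / (2 * c) ≤ Y ω} := by
    rintro ω ⟨hs, hδS⟩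
    have hY : Y ω = l * ∑ t ∈ Finset.Icc n₀ T, C t ω * X t ω
        - c * l ^ 2 / 2 * ∑ t ∈ Finset.Icc n₀ T, C t ω := by
      simp only [Y, Finset.mul_sum, ← Finset.sum_sub_distrib]
      exact Finset.sum_congr rfl fun t _ => by ring
    have hl : 0 ≤ l := div_nonneg hδ hc'.le
    show _ ≤ Y ω
    rw [hY]
    calc s * δ ^ 2 / (2 * c) ≤ (∑ t ∈ Finset.Icc n₀ T, C t ω) * δ ^ 2 / (2 * c) := by gcongr
      _ = l * ((∑ t ∈ Finset.Icc n₀ T, C t ω) * δ)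
          - c * l ^ 2 / 2 * ∑ t ∈ Finset.Icc n₀ T, C t ω := by
        simp only [l]; field_simp; ring
      _ ≤ _ := by gcongr
  calc _ ≤ P {ω | s * δ ^ 2 / (2 * c) ≤ Y ω} := measure_mono hsub
    _ = ENNReal.ofReal (P.real {ω | s * δ ^ 2 / (2 * c) ≤ Y ω}) := (ofReal_measureReal).symm
    _ ≤ ENNReal.ofReal (exp (-(s * δ ^ 2) / (2 * c))) := by
      refine ENNReal.ofReal_le_ofReal ((measure_ge_le_exp_mul_mgf _ zero_le_one
        (by simp only [one_mul]; exact hint)).trans ?_)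
      calc exp (-1 * (s * δ ^ 2 / (2 * c))) * mgf Y P 1 ≤ exp (-1 * (s * δ ^ 2 / (2 * c))) * 1 := by
            gcongr
        _ = _ := by ring_nf

lemma measure_stopped_sum_mul_ge_le [IsProbabilityMeasure P] (hc : 0 < c)
    (hX : ∀ t, HasSubgaussianMGF (X t) c P) (hXm : ∀ t, Measurable[F t] (X t))
    (hindep : ∀ n, Indep (F n) (MeasurableSpace.comap (X (n + 1)) inferInstance) P)
    (hC01 : ∀ t ω, C t ω = 0 ∨ C t ω = 1) (hCm : ∀ t, Measurable[F (t - 1)] (C t))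
    {φ : Ω → ℤ} (hφ : IsStoppingTime F (fun ω => (φ ω : WithTop ℤ))) (n₀ T : ℤ) (s : ℝ) {δ : ℝ}
    (hδ : 0 ≤ δ) :
    P {ω | φ ω ≤ T ∧ s ≤ ∑ t ∈ Finset.Icc n₀ (φ ω), C t ω ∧
        (∑ t ∈ Finset.Icc n₀ (φ ω), C t ω) * δ ≤ ∑ t ∈ Finset.Icc n₀ (φ ω), C t ω * X t ω}
      ≤ ENNReal.ofReal (exp (-(s * δ ^ 2) / (2 * c))) := by
  -- stopping the selection at `φ` keeps it predictable, since `{t ≤ φ} = {φ ≤ t - 1}ᶜ`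
  let Cφ : ℤ → Ω → ℝ := fun t ω => if t ≤ φ ω then C t ω else 0
  have hCφ01 : ∀ t ω, Cφ t ω = 0 ∨ Cφ t ω = 1 := fun t ω => by
    by_cases h : t ≤ φ ω <;> simp [Cφ, h, hC01 t ω]
  have hCφm : ∀ t, Measurable[F (t - 1)] (Cφ t) := fun t => by
    refine Measurable.ite ?_ (hCm t) measurable_const
    convert (hφ (t - 1)).compl using 1
    ext ω
    simp only [Set.mem_ofPred_eq, Set.mem_compl_iff, WithTop.coe_le_coe, not_le]
    omega
  have hsum : ∀ ω, φ ω ≤ T → ∀ g : ℤ → ℝ,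
      ∑ t ∈ Finset.Icc n₀ T, Cφ t ω * g t = ∑ t ∈ Finset.Icc n₀ (φ ω), C t ω * g t :=
    fun ω hφT g => by simpa only [Cφ, ite_mul, zero_mul] using sum_Icc_ite_le hφT _
  refine le_trans (measure_mono fun ω ⟨hφT, hs, hδS⟩ => ?_)
    (measure_sum_mul_ge_le hc hX hXm hindep hCφ01 hCφm n₀ T s hδ)
  have hsum₁ := hsum ω hφT fun _ => 1
  simp only [mul_one] at hsum₁
  exact ⟨hsum₁ ▸ hs, by rwa [hsum₁, hsum ω hφT fun t => X t ω]⟩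

end CompensatedExp

theorem stmt_5_general {Ω : Type*} {mΩ : MeasurableSpace Ω} (P : Measure Ω) [IsProbabilityMeasure P]
    (B : ℝ) (hB : 0 < B) (n₀ T : ℤ) (s : ℕ) (δ : ℝ) (hδ : 0 < δ)
    (Z : ℤ → Ω → ℝ) (hZm : ∀ t, StronglyMeasurable (Z t))
    (hZb : ∀ t ω, Z t ω ∈ Set.Icc 0 B)
    (hindep : iIndepFun Z P)
    (Bsel : ℤ → Ω → ℝ) (hB01 : ∀ t ω, Bsel t ω = 0 ∨ Bsel t ω = 1)
    (hBm : ∀ t, Measurable[(MeasureTheory.Filtration.natural Z hZm) (t - 1)] (Bsel t))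
    (φ : Ω → ℤ) (hφ : IsStoppingTime (MeasureTheory.Filtration.natural Z hZm) (fun ω => (φ ω : WithTop ℤ)))
    (hφs : ∀ ω, φ ω ≤ T → (s : ℝ) ≤ ∑ t ∈ Finset.Icc n₀ (φ ω), Bsel t ω) :
    P {ω | (∑ t ∈ Finset.Icc n₀ (φ ω), Bsel t ω) * δ ≤
            |∑ t ∈ Finset.Icc n₀ (φ ω), Bsel t ω * (Z t ω - ∫ x, Z t x ∂P)| ∧
          φ ω ≤ T}
      ≤ ENNReal.ofReal (2 * Real.exp (-2 * (s : ℝ) * δ ^ 2 / B ^ 2)) := by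
  set X : ℤ → Ω → ℝ := fun t ω => Z t ω - ∫ x, Z t x ∂P
  have hXm : ∀ t, Measurable[Filtration.natural Z hZm t] (X t) := fun t =>
    (Filtration.stronglyAdapted_natural hZm t).measurable.sub_const _
  have hXindep : ∀ n, Indep (Filtration.natural Z hZm n)
      (MeasurableSpace.comap (X (n + 1)) inferInstance) P := fun n =>
    indep_of_indep_of_le_right (indep_natural_comap_of_not_le hZm hindep (by omega))
      ((comap_measurable _).sub_const _).comap_le
  have hXsub : ∀ t, HasSubgaussianMGF (X t) ((‖B - 0‖₊ / 2) ^ 2) P := fun t =>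
    hasSubgaussianMGF_of_mem_Icc (hZm t).measurable.aemeasurable (ae_of_all _ (hZb t))
  have hc : 0 < (‖B - 0‖₊ / 2) ^ 2 := by simp [hB.ne']
  have hexp : -((s : ℝ) * δ ^ 2) / (2 * (((‖B - 0‖₊ / 2) ^ 2 : ℝ≥0) : ℝ)) =
      -2 * (s : ℝ) * δ ^ 2 / B ^ 2 := by
    simp only [sub_zero, NNReal.coe_pow, NNReal.coe_div, coe_nnnorm, norm_eq_abs, abs_of_pos hB,
      NNReal.coe_ofNat]
    field_simp
  have hupper := measure_stopped_sum_mul_ge_le hc hXsub hXm hXindep hB01 hBm hφ n₀ T s hδ.le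
  have hlower := measure_stopped_sum_mul_ge_le hc (fun t => (hXsub t).neg) (fun t => (hXm t).neg)
    (fun n => indep_of_indep_of_le_right (hXindep n) (comap_measurable _).neg.comap_le)
    hB01 hBm hφ n₀ T s hδ.le
  rw [hexp] at hupper hlower
  refine (measure_mono ?_).trans ((measure_union_le _ _).trans
    ((add_le_add hupper hlower).trans_eq ?_))
  · rintro ω ⟨habs, hφT⟩
    rcases le_abs.1 habs with h | h
    · exact Or.inl ⟨hφT, hφs ω hφT, h⟩
    · exact Or.inr ⟨hφT, hφs ω hφT, by simpa only [Pi.neg_apply, mul_neg, Finset.sum_neg_distrib]⟩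
  · rw [← ENNReal.ofReal_add (by positivity) (by positivity), two_mul]

theorem stmt_5 {Ω : Type*} {mΩ : MeasurableSpace Ω} (P : Measure Ω) [IsProbabilityMeasure P]
    (B : ℝ) (hB : 0 < B) (n₀ T : ℤ) (hT : n₀ ≤ T) (s : ℕ) (δ : ℝ) (hδ : 0 < δ)
    (Z : ℤ → Ω → ℝ) (hZm : ∀ t, StronglyMeasurable (Z t))
    (hZb : ∀ t ω, Z t ω ∈ Set.Icc 0 B)
    (hindep : iIndepFun Z P)
    (Bsel : ℤ → Ω → ℝ) (hB01 : ∀ t ω, Bsel t ω = 0 ∨ Bsel t ω = 1)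
    (hBm : ∀ t, Measurable[(MeasureTheory.Filtration.natural Z hZm) (t - 1)] (Bsel t))
    (φ : Ω → ℤ) (hφ : IsStoppingTime (MeasureTheory.Filtration.natural Z hZm) (fun ω => (φ ω : WithTop ℤ)))
    (hφr : ∀ ω, φ ω ∈ Set.Icc n₀ (T + 1))
    (hφs : ∀ ω, φ ω ≤ T → (s : ℝ) ≤ ∑ t ∈ Finset.Icc n₀ (φ ω), Bsel t ω) :
    P {ω | (∑ t ∈ Finset.Icc n₀ (φ ω), Bsel t ω) * δ ≤
            |∑ t ∈ Finset.Icc n₀ (φ ω), Bsel t ω * (Z t ω - ∫ x, Z t x ∂P)| ∧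
          φ ω ≤ T}
      ≤ ENNReal.ofReal (2 * Real.exp (-2 * (s : ℝ) * δ ^ 2 / B ^ 2)) :=
  stmt_5_general (mΩ := mΩ) P B hB n₀ T s δ hδ Z hZm hZb hindep Bsel hB01 hBm φ hφ hφs
end

section
/- Let k ≠ k′ be two arms with E[μ̂_k(n)] ≤ E[μ̂_{k′}(n)] − Δ for all n ∈ Λ, where Δ > 0, and suppose there exist random sets Λ(s) with Λ ⊆ ∪_s Λ(s), |Λ(s)| ≤ 1, and t_k(n) ≥ εs and t_{k′}(n) ≥ εs for n ∈ Λ(s), with n ∈ Λ(s) measurable with respect to the history up to n. Then E[Σ_{n≥1} 1{n ∈ Λ, μ̂_k(n) > μ̂_{k′}(n)}] ≤ 8/(εΔ²). -/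
/-!
Put `δ = Δ / 2`. If `μ̂_k(n) > μ̂_{k'}(n)`, then `μ̂_k(n) ≥ μ_k + δ` or `μ̂_{k'}(n) ≤ μ_{k'} - δ`.
For a predictable `0/1` selection `B` and independent `c`-sub-Gaussian increments `X`, the process
`exp (λ ∑ B X - c λ² / 2 ∑ B)` is a nonnegative supermartingale. Since the events `{n ∈ Λ(s)}`
are disjoint in `n` and adapted, its integrals over them sum to at most `1`, and the exponential
Markov inequality with `λ = δ / c` bounds the probability of a `δ`-deviation at a time with
`t(n) ≥ ε s` by `exp (-2 δ² ε s)`, because rewards in `[0, 1]` are `1/4`-sub-Gaussian (Hoeffding's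
lemma). Summing over both arms and `s ≥ 1` gives `2 ∑ₛ exp (-ε Δ² s / 2) ≤ 4 / (ε Δ²)`.
-/

open MeasureTheory ProbabilityTheory Finset Function Real
open scoped Classical ENNReal

section

variable {Ω : Type*} {mΩ : MeasurableSpace Ω} {P : Measure Ω}

theorem MeasureTheory.Supermartingale.sum_setIntegral_le_of_pairwise_disjoint [IsFiniteMeasure P]
    {G : Filtration ℕ mΩ} {M : ℕ → Ω → ℝ} (hM : Supermartingale M G P) (hM0 : ∀ n ω, 0 ≤ M n ω)
    {A : ℕ → Set Ω} (hA : ∀ n, MeasurableSet[G n] (A n)) (hdisj : Pairwise (Disjoint on A))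
    (K : ℕ) : ∑ n ∈ range K, ∫ ω in A n, M n ω ∂P ≤ ∫ ω, M 0 ω ∂P := by
  let C : ℕ → Set Ω := fun K => (⋃ n ∈ range K, A n)ᶜ
  have hC : ∀ K, MeasurableSet[G K] (C (K + 1)) := fun K =>
    (Finset.measurableSet_biUnion _ fun n hn =>
      G.mono (Nat.lt_succ_iff.1 (mem_range.1 hn)) _ (hA n)).compl
  have hCA : ∀ K, C K ∩ A K = A K ∧ C K \ A K = C (K + 1) := by
    refine fun K => ⟨Set.inter_eq_right.2 fun ω hω => ?_, ?_⟩
    · simp only [C, Set.mem_compl_iff, Set.mem_iUnion, mem_range, not_exists]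
      exact fun n hn hωn => Set.disjoint_left.1 (hdisj hn.ne) hωn hω
    · simp only [C, range_add_one, Finset.set_biUnion_insert, Set.compl_union]
      exact Set.sdiff_eq_compl_inter
  have key : ∀ K, ∑ n ∈ range K, ∫ ω in A n, M n ω ∂P + ∫ ω in C K, M K ω ∂P
      ≤ ∫ ω, M 0 ω ∂P := by
    intro K
    induction K with
    | zero => simp [C]
    | succ K ih =>
      have hsplit := integral_inter_add_sdiff (G.le K _ (hA K)) (hM.integrable K).integrableOn
        (s := C K)
      rw [(hCA K).1, (hCA K).2] at hsplit
      have hstep := hM.setIntegral_le K.le_succ (hC K)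
      rw [sum_range_succ]
      linarith
  exact le_of_add_le_of_nonneg_left (key K) (integral_nonneg (hM0 K))

lemma indepFun_comp_of_indep_comap {m : MeasurableSpace Ω} {f Y : Ω → ℝ}
    (h : Indep m (MeasurableSpace.comap Y inferInstance) P) (hf : Measurable[m] f)
    {g : ℝ → ℝ} (hg : Measurable g) : IndepFun f (g ∘ Y) P := by
  rw [IndepFun_iff_Indep]
  refine indep_of_indep_of_le_left (indep_of_indep_of_le_right h ?_) hf.comap_le
  rw [← MeasurableSpace.comap_comp]
  exact MeasurableSpace.comap_mono hg.comap_le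

lemma ProbabilityTheory.HasSubgaussianMGF.integrable_exp_mul_sub {Y : Ω → ℝ} {c : NNReal}
    (h : HasSubgaussianMGF Y c P) (l a : ℝ) : Integrable (fun ω => exp (l * Y ω - a)) P := by
  simp_rw [exp_sub]
  exact (h.integrable_exp_mul l).div_const _

lemma ProbabilityTheory.HasSubgaussianMGF.integral_exp_mul_sub_le_one {Y : Ω → ℝ} {c : NNReal}
    (h : HasSubgaussianMGF Y c P) (l : ℝ) : ∫ ω, exp (l * Y ω - c * l ^ 2 / 2) ∂P ≤ 1 := by
  simp_rw [exp_sub]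
  rw [integral_div, div_le_one (exp_pos _)]
  exact h.mgf_le l

lemma hasSubgaussianMGF_sub_of_mem_unitInterval [IsProbabilityMeasure P] {Y : Ω → ℝ}
    (hY : Measurable Y) (hb : ∀ ω, Y ω ∈ Set.Icc 0 1) {ν : ℝ} (hν : ∫ ω, Y ω ∂P = ν) :
    HasSubgaussianMGF (fun ω => Y ω - ν) (1 / 4) P := by
  have h := hasSubgaussianMGF_of_mem_Icc (μ := P) hY.aemeasurable (Filter.Eventually.of_forall hb)
  rw [hν] at h
  convert h using 1
  norm_num

noncomputable def expProcess (l c : ℝ) (B X : ℕ → Ω → ℝ) (n : ℕ) (ω : Ω) : ℝ :=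
  exp (l * ∑ t ∈ Icc 1 n, B t ω * X t ω - c * l ^ 2 / 2 * ∑ t ∈ Icc 1 n, B t ω)

section expProcess

variable {l : ℝ} {B X : ℕ → Ω → ℝ} {G : Filtration ℕ mΩ}

@[simp]
lemma expProcess_zero (c : ℝ) (ω : Ω) : expProcess l c B X 0 ω = 1 := by
  simp [expProcess]

lemma expProcess_succ {c : ℝ} (hB01 : ∀ t ω, B t ω = 0 ∨ B t ω = 1) (n : ℕ) (ω : Ω) :
    expProcess l c B X (n + 1) ω = expProcess l c B X n ω
      + expProcess l c B X n ω * B (n + 1) ω * (exp (l * X (n + 1) ω - c * l ^ 2 / 2) - 1) := by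
  have hexp : expProcess l c B X (n + 1) ω = expProcess l c B X n ω
      * exp (B (n + 1) ω * (l * X (n + 1) ω - c * l ^ 2 / 2)) := by
    simp only [expProcess, sum_Icc_succ_top (Nat.le_add_left 1 n), ← exp_add]
    ring_nf
  rcases hB01 (n + 1) ω with h | h <;> simp only [hexp, h, zero_mul, exp_zero, one_mul] <;> ring

lemma measurable_expProcess {c : ℝ} (hX : ∀ t, Measurable[G t] (X t))
    (hB : ∀ t, Measurable[G (t - 1)] (B t)) (n : ℕ) : Measurable[G n] (expProcess l c B X n) := by
  have hsum : ∀ Y : ℕ → Ω → ℝ, (∀ t ≤ n, Measurable[G n] (Y t)) →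
      Measurable[G n] (fun ω => ∑ t ∈ Icc 1 n, B t ω * Y t ω) := fun Y hY =>
    Finset.measurable_sum _ fun t ht => ((hB t).mono (G.mono (by grind)) le_rfl).mul
      (hY t (mem_Icc.1 ht).2)
  have hX' := hsum X fun t ht => (hX t).mono (G.mono ht) le_rfl
  have h1 := hsum 1 fun _ _ => measurable_const
  simp only [Pi.one_apply, mul_one] at h1
  exact (hX'.const_mul l |>.sub (h1.const_mul _)).exp

variable {c : NNReal}

lemma integrable_expProcess [IsFiniteMeasure P] (hX : ∀ t, Measurable[G t] (X t))
    (hXsg : ∀ t, HasSubgaussianMGF (X t) c P)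
    (hXind : ∀ t, Indep (G t) (MeasurableSpace.comap (X (t + 1)) inferInstance) P)
    (hB01 : ∀ t ω, B t ω = 0 ∨ B t ω = 1) (hB : ∀ t, Measurable[G (t - 1)] (B t)) (n : ℕ) :
    Integrable (expProcess l c B X n) P := by
  induction n with
  | zero =>
    simp_rw [funext (expProcess_zero (l := l) (B := B) (X := X) c)]
    exact integrable_const 1
  | succ n ih =>
    have hφ : Measurable[G n] (fun ω => expProcess l c B X n ω * B (n + 1) ω) :=
      (measurable_expProcess hX hB n).mul (hB (n + 1))
    have hind := indepFun_comp_of_indep_comap (hXind n) hφ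
      (g := fun x => exp (l * x - c * l ^ 2 / 2) - 1) (by fun_prop)
    refine (ih.add (hind.integrable_mul ?_ ?_)).congr (Filter.Eventually.of_forall fun ω => ?_)
    · refine ih.mul_bdd (c := 1) ((hB (n + 1)).mono (G.le _) le_rfl).aestronglyMeasurable
        (Filter.Eventually.of_forall fun ω => ?_)
      rcases hB01 (n + 1) ω with h | h <;> simp [h]
    · exact ((hXsg _).integrable_exp_mul_sub _ _).sub (integrable_const 1)
    · simp [expProcess_succ hB01, mul_assoc]

lemma setIntegral_expProcess_succ_le [IsProbabilityMeasure P] (hX : ∀ t, Measurable[G t] (X t))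
    (hXsg : ∀ t, HasSubgaussianMGF (X t) c P)
    (hXind : ∀ t, Indep (G t) (MeasurableSpace.comap (X (t + 1)) inferInstance) P)
    (hB01 : ∀ t ω, B t ω = 0 ∨ B t ω = 1) (hB : ∀ t, Measurable[G (t - 1)] (B t)) (n : ℕ)
    {C : Set Ω} (hC : MeasurableSet[G n] C) :
    ∫ ω in C, expProcess l c B X (n + 1) ω ∂P ≤ ∫ ω in C, expProcess l c B X n ω ∂P := by
  set ψ : ℝ → ℝ := fun x => exp (l * x - c * l ^ 2 / 2) - 1
  set φ : Ω → ℝ := C.indicator fun ω => expProcess l c B X n ω * B (n + 1) ω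
  have hφ : Measurable[G n] φ :=
    ((measurable_expProcess hX hB n).mul (hB (n + 1))).indicator hC
  have hψ : Measurable ψ := by fun_prop
  have hφψ : IndepFun φ (ψ ∘ X (n + 1)) P := indepFun_comp_of_indep_comap (hXind n) hφ hψ
  have hint := integrable_expProcess (l := l) hX hXsg hXind hB01 hB
  have hdiff : ∫ ω in C, expProcess l c B X (n + 1) ω ∂P - ∫ ω in C, expProcess l c B X n ω ∂P
      = (∫ ω, φ ω ∂P) * ∫ ω, (ψ ∘ X (n + 1)) ω ∂P := by
    rw [← integral_sub (hint (n + 1)).integrableOn (hint n).integrableOn,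
      ← integral_indicator (G.le n _ hC), ← hφψ.integral_fun_mul_eq_mul_integral
        (hφ.mono (G.le n) le_rfl).aestronglyMeasurable
        (hψ.comp ((hX _).mono (G.le _) le_rfl)).aestronglyMeasurable]
    congr 1 with ω
    by_cases hω : ω ∈ C
    · simp [φ, ψ, hω, expProcess_succ hB01, mul_assoc]
    · simp [φ, hω]
  have hφ0 : 0 ≤ ∫ ω, φ ω ∂P := integral_nonneg fun ω =>
    Set.indicator_nonneg (fun ω _ => mul_nonneg (exp_pos _).le (by
      rcases hB01 (n + 1) ω with h | h <;> simp [h])) ω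
  have hψ0 : ∫ ω, (ψ ∘ X (n + 1)) ω ∂P ≤ 0 := by
    simp only [ψ, Function.comp_def]
    rw [integral_sub ((hXsg _).integrable_exp_mul_sub _ _) (integrable_const 1)]
    simpa using (hXsg (n + 1)).integral_exp_mul_sub_le_one l
  linarith [mul_nonpos_of_nonneg_of_nonpos hφ0 hψ0]

lemma supermartingale_expProcess [IsProbabilityMeasure P] (hX : ∀ t, Measurable[G t] (X t))
    (hXsg : ∀ t, HasSubgaussianMGF (X t) c P)
    (hXind : ∀ t, Indep (G t) (MeasurableSpace.comap (X (t + 1)) inferInstance) P)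
    (hB01 : ∀ t ω, B t ω = 0 ∨ B t ω = 1) (hB : ∀ t, Measurable[G (t - 1)] (B t)) :
    Supermartingale (expProcess l c B X) G P :=
  supermartingale_of_setIntegral_succ_le
    (fun n => (measurable_expProcess hX hB n).stronglyMeasurable)
    (integrable_expProcess hX hXsg hXind hB01 hB)
    (fun n _ hC => setIntegral_expProcess_succ_le hX hXsg hXind hB01 hB n hC)

end expProcess

lemma sq_div_mul_le_div_mul_sub {δ m S T : ℝ} (c : ℝ) (hδ : 0 ≤ δ) (hc : 0 ≤ c)
    (hS : δ * T ≤ S) (hT : m ≤ T) :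
    δ ^ 2 / (2 * c) * m ≤ δ / c * S - c * (δ / c) ^ 2 / 2 * T := by
  have key : δ / c * S - c * (δ / c) ^ 2 / 2 * T = δ / c * (S - δ * T) + δ ^ 2 / (2 * c) * T := by
    rcases hc.eq_or_lt with rfl | hc
    · simp -- both sides vanish, as `x / 0 = 0`
    · field_simp
      ring
  rw [key]
  have := mul_nonneg (div_nonneg hδ hc) (sub_nonneg.2 hS)
  have := mul_le_mul_of_nonneg_left hT (div_nonneg (sq_nonneg δ) (mul_nonneg zero_le_two hc))
  linarith

theorem tsum_measure_inter_deviation_le [IsProbabilityMeasure P] {G : Filtration ℕ mΩ}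
    {B X : ℕ → Ω → ℝ} {c : NNReal} (hX : ∀ t, Measurable[G t] (X t))
    (hXsg : ∀ t, HasSubgaussianMGF (X t) c P)
    (hXind : ∀ t, Indep (G t) (MeasurableSpace.comap (X (t + 1)) inferInstance) P)
    (hB01 : ∀ t ω, B t ω = 0 ∨ B t ω = 1) (hB : ∀ t, Measurable[G (t - 1)] (B t))
    {A : ℕ → Set Ω} (hA : ∀ n, MeasurableSet[G n] (A n)) (hdisj : Pairwise (Disjoint on A))
    {δ m : ℝ} (hδ : 0 ≤ δ) (hm : ∀ n, ∀ ω ∈ A n, m ≤ ∑ t ∈ Icc 1 n, B t ω) :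
    ∑' n, P (A n ∩ {ω | δ * ∑ t ∈ Icc 1 n, B t ω ≤ ∑ t ∈ Icc 1 n, B t ω * X t ω})
      ≤ ENNReal.ofReal (exp (-(δ ^ 2 / (2 * c) * m))) := by
  set E : ℕ → Set Ω := fun n =>
    A n ∩ {ω | δ * ∑ t ∈ Icc 1 n, B t ω ≤ ∑ t ∈ Icc 1 n, B t ω * X t ω}
  set M := expProcess (δ / c) c B X
  have hM := supermartingale_expProcess (l := δ / c) hX hXsg hXind hB01 hB
  set r := δ ^ 2 / (2 * c) * m
  have hmarkov : ∀ n, exp r * P.real (E n) ≤ ∫ ω in A n, M n ω ∂P := by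
    intro n
    refine le_trans ?_ (mul_meas_ge_le_integral_of_nonneg
      (Filter.Eventually.of_forall fun ω => (exp_pos _).le) (hM.integrable n).integrableOn (exp r))
    rw [measureReal_restrict_apply' (G.le n _ (hA n))]
    refine mul_le_mul_of_nonneg_left (measureReal_mono fun ω hω => ⟨?_, hω.1⟩) (exp_pos r).le
    exact exp_le_exp.2 (sq_div_mul_le_div_mul_sub c hδ c.2 hω.2 (hm n ω hω.1))
  have hsum : ∀ K, ∑ n ∈ range K, P.real (E n) ≤ exp (-r) := by
    intro K
    have hville := hM.sum_setIntegral_le_of_pairwise_disjoint (fun n ω => (exp_pos _).le) hA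
      hdisj K
    simp only [expProcess_zero, integral_const, probReal_univ, smul_eq_mul, mul_one] at hville
    calc ∑ n ∈ range K, P.real (E n) = exp (-r) * ∑ n ∈ range K, exp r * P.real (E n) := by
          rw [← mul_sum, ← mul_assoc, ← exp_add, neg_add_cancel, exp_zero, one_mul]
      _ ≤ exp (-r) := mul_le_of_le_one_right (exp_pos _).le
          ((sum_le_sum fun n _ => hmarkov n).trans hville)
  refine ENNReal.tsum_le_of_sum_range_le fun K => ?_
  calc ∑ n ∈ range K, P (E n) = ∑ n ∈ range K, ENNReal.ofReal (P.real (E n)) :=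
        sum_congr rfl fun n _ => (ofReal_measureReal).symm
    _ = ENNReal.ofReal (∑ n ∈ range K, P.real (E n)) :=
        (ENNReal.ofReal_sum_of_nonneg fun _ _ => measureReal_nonneg).symm
    _ ≤ _ := ENNReal.ofReal_le_ofReal (hsum K)

theorem tsum_measure_inter_upper_deviation_le_of_mem_unitInterval [IsProbabilityMeasure P]
    {G : Filtration ℕ mΩ} {B Y : ℕ → Ω → ℝ} (hY : ∀ t, Measurable[G t] (Y t))
    (hYb : ∀ t ω, Y t ω ∈ Set.Icc 0 1) {ν : ℝ} (hν : ∀ t, ∫ ω, Y t ω ∂P = ν)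
    (hYind : ∀ t, Indep (G t) (MeasurableSpace.comap (Y (t + 1)) inferInstance) P)
    (hB01 : ∀ t ω, B t ω = 0 ∨ B t ω = 1) (hB : ∀ t, Measurable[G (t - 1)] (B t))
    {A : ℕ → Set Ω} (hA : ∀ n, MeasurableSet[G n] (A n)) (hdisj : Pairwise (Disjoint on A))
    {δ m : ℝ} (hδ : 0 ≤ δ) (hm : ∀ n, ∀ ω ∈ A n, m ≤ ∑ t ∈ Icc 1 n, B t ω) :
    ∑' n, P (A n ∩ {ω | δ * ∑ t ∈ Icc 1 n, B t ω ≤ ∑ t ∈ Icc 1 n, B t ω * (Y t ω - ν)})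
      ≤ ENNReal.ofReal (exp (-(2 * δ ^ 2 * m))) := by
  convert tsum_measure_inter_deviation_le (X := fun t ω => Y t ω - ν) (c := 1 / 4)
    (fun t => (hY t).sub_const ν)
    (fun t => hasSubgaussianMGF_sub_of_mem_unitInterval
      ((hY t).mono (G.le t) le_rfl) (hYb t) (hν t))
    (fun t => indep_of_indep_of_le_right (hYind t) ((comap_measurable _).sub_const ν).comap_le)
    hB01 hB hA hdisj hδ hm using 4
  push_cast
  ring

theorem tsum_measure_inter_lower_deviation_le_of_mem_unitInterval [IsProbabilityMeasure P]
    {G : Filtration ℕ mΩ} {B Y : ℕ → Ω → ℝ} (hY : ∀ t, Measurable[G t] (Y t))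
    (hYb : ∀ t ω, Y t ω ∈ Set.Icc 0 1) {ν : ℝ} (hν : ∀ t, ∫ ω, Y t ω ∂P = ν)
    (hYind : ∀ t, Indep (G t) (MeasurableSpace.comap (Y (t + 1)) inferInstance) P)
    (hB01 : ∀ t ω, B t ω = 0 ∨ B t ω = 1) (hB : ∀ t, Measurable[G (t - 1)] (B t))
    {A : ℕ → Set Ω} (hA : ∀ n, MeasurableSet[G n] (A n)) (hdisj : Pairwise (Disjoint on A))
    {δ m : ℝ} (hδ : 0 ≤ δ) (hm : ∀ n, ∀ ω ∈ A n, m ≤ ∑ t ∈ Icc 1 n, B t ω) :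
    ∑' n, P (A n ∩ {ω | δ * ∑ t ∈ Icc 1 n, B t ω ≤ ∑ t ∈ Icc 1 n, B t ω * (ν - Y t ω)})
      ≤ ENNReal.ofReal (exp (-(2 * δ ^ 2 * m))) := by
  convert tsum_measure_inter_deviation_le (X := fun t ω => ν - Y t ω) (c := 1 / 4)
    (fun t => (hY t).const_sub ν)
    (fun t => by simpa [Pi.neg_def] using (hasSubgaussianMGF_sub_of_mem_unitInterval
      ((hY t).mono (G.le t) le_rfl) (hYb t) (hν t)).neg)
    (fun t => indep_of_indep_of_le_right (hYind t) ((comap_measurable _).const_sub ν).comap_le)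
    hB01 hB hA hdisj hδ hm using 4
  push_cast
  ring

lemma indep_natural_comap_of_iIndepFun {Z Z' : ℕ → Ω → ℝ}
    (hpm : ∀ t, StronglyMeasurable (fun ω => (Z t ω, Z' t ω)))
    (hindep : iIndepFun (m := fun _ => inferInstance)
      (fun p : Bool × ℕ => if p.1 then Z' p.2 else Z p.2) P)
    {N t : ℕ} (hNt : N < t) (b : Bool) :
    Indep (Filtration.natural _ hpm N)
      (MeasurableSpace.comap (if b then Z' t else Z t) inferInstance) P := by
  set f : Bool × ℕ → Ω → ℝ := fun p => if p.1 then Z' p.2 else Z p.2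
  set S : Set (Bool × ℕ) := {p | p.2 ≤ N}
  have hf : ∀ p, Measurable (f p) := by
    rintro ⟨_ | _, s⟩
    exacts [(hpm s).measurable.fst, (hpm s).measurable.snd]
  have h := indep_iSup_of_disjoint (fun p => (hf p).comap_le) hindep.iIndep
    (S := S) (T := {(b, t)}) (by simpa [S] using hNt.not_ge)
  rw [_root_.iSup_singleton] at h
  refine indep_of_indep_of_le_left h (iSup₂_le fun j hj => ?_)
  refine (MeasurableSpace.comap_prodMk (Z j) (Z' j)).le.trans (sup_le ?_ ?_)
  exacts [le_biSup (fun p => MeasurableSpace.comap (f p) _) (show (false, j) ∈ S from hj),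
    le_biSup (fun p => MeasurableSpace.comap (f p) _) (show (true, j) ∈ S from hj)]

lemma deviation_of_div_lt_div {ι : Type*} (s : Finset ι) {b b' z z' : ι → ℝ} {μ μ' δ : ℝ}
    (hgap : μ + δ ≤ μ' - δ) (hb : 0 < ∑ i ∈ s, b i) (hb' : 0 < ∑ i ∈ s, b' i)
    (hlt : (∑ i ∈ s, b' i * z' i) / ∑ i ∈ s, b' i < (∑ i ∈ s, b i * z i) / ∑ i ∈ s, b i) :
    δ * ∑ i ∈ s, b i ≤ ∑ i ∈ s, b i * (z i - μ) ∨
      δ * ∑ i ∈ s, b' i ≤ ∑ i ∈ s, b' i * (μ' - z' i) := by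
  simp only [mul_sub, sum_sub_distrib, ← sum_mul] at *
  rw [div_lt_div_iff₀ hb' hb] at hlt
  by_contra! h
  nlinarith [mul_lt_mul_of_pos_right h.1 hb', mul_lt_mul_of_pos_right h.2 hb,
    mul_le_mul_of_nonneg_right hgap (mul_pos hb hb').le]

lemma tsum_ofReal_exp_neg_mul_succ_le {x : ℝ} (hx : 0 < x) :
    ∑' k : ℕ, ENNReal.ofReal (exp (-(x * ↑(k + 1)))) ≤ ENNReal.ofReal (1 / x) := by
  set r := exp (-x)
  have hr0 : 0 ≤ r := (exp_pos _).le
  have hr1 : r < 1 := exp_lt_one_iff.2 (neg_lt_zero.2 hx)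
  have hpow : ∀ k : ℕ, exp (-(x * ↑(k + 1))) = r ^ (k + 1) := fun k => by
    rw [← exp_nat_mul]
    ring_nf
  have hsum : ∑' k : ℕ, r ^ (k + 1) = r / (1 - r) := by
    simp_rw [pow_succ', tsum_mul_left, tsum_geometric_of_lt_one hr0 hr1, div_eq_mul_inv]
  have hbound : r / (1 - r) ≤ 1 / x := by
    have hrx : r * exp x = 1 := by rw [← exp_add, neg_add_cancel, exp_zero]
    rw [div_le_div_iff₀ (sub_pos.2 hr1) hx]
    nlinarith [add_one_le_exp x]
  simp_rw [hpow]
  rw [← ENNReal.ofReal_tsum_of_nonneg (fun k => pow_nonneg hr0 _)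
    ((summable_geometric_of_lt_one hr0 hr1).comp_injective (add_left_injective 1)), hsum]
  exact ENNReal.ofReal_le_ofReal hbound

lemma tsum_measure_inter_union_le (A D D' : ℕ → Set Ω) :
    ∑' n, P (A n ∩ (D n ∪ D' n)) ≤ ∑' n, P (A n ∩ D n) + ∑' n, P (A n ∩ D' n) := by
  rw [← ENNReal.tsum_add]
  refine ENNReal.tsum_le_tsum fun n => ?_
  rw [Set.inter_union_distrib_left]
  exact measure_union_le _ _

lemma lintegral_tsum_ite_le_tsum_tsum_measure {p : ℕ → Ω → Prop} [∀ n ω, Decidable (p n ω)]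
    {E : ℕ → ℕ → Set Ω} (hE : ∀ k n, MeasurableSet (E k n)) (hp : ∀ n ω, p n ω → ∃ k, ω ∈ E k n) :
    ∫⁻ ω, ∑' n, (if p n ω then (1 : ℝ≥0∞) else 0) ∂P ≤ ∑' k, ∑' n, P (E k n) := by
  calc ∫⁻ ω, ∑' n, (if p n ω then (1 : ℝ≥0∞) else 0) ∂P
      ≤ ∫⁻ ω, ∑' n, ∑' k, (E k n).indicator 1 ω ∂P := by
        refine lintegral_mono fun ω => ENNReal.tsum_le_tsum fun n => ?_
        split_ifs with h
        · obtain ⟨k, hk⟩ := hp n ω h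
          exact (Set.indicator_of_mem hk 1).symm.le.trans (ENNReal.le_tsum k)
        · exact zero_le
    _ = ∑' n, ∑' k, P (E k n) := by
        rw [lintegral_tsum fun n => (Measurable.tsum fun k =>
          measurable_one.indicator (hE k n)).aemeasurable]
        refine tsum_congr fun n => ?_
        rw [lintegral_tsum fun k => (measurable_one.indicator (hE k n)).aemeasurable]
        exact tsum_congr fun k => lintegral_indicator_one (hE k n)
    _ = ∑' k, ∑' n, P (E k n) := ENNReal.tsum_comm

end

theorem stmt_10 {Ω : Type*} {mΩ : MeasurableSpace Ω} (P : Measure Ω) [IsProbabilityMeasure P]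
    (Z Z' : ℕ → Ω → ℝ)
    (hpm : ∀ t, StronglyMeasurable (fun ω => (Z t ω, Z' t ω)))
    (hZb : ∀ t ω, Z t ω ∈ Set.Icc (0 : ℝ) 1) (hZb' : ∀ t ω, Z' t ω ∈ Set.Icc (0 : ℝ) 1)
    (hindep : iIndepFun (m := fun _ => inferInstance)
      (fun p : Bool × ℕ => if p.1 then Z' p.2 else Z p.2) P)
    (μ μ' Δ : ℝ) (hΔ : 0 < Δ)
    (hmean : ∀ t, ∫ ω, Z t ω ∂P = μ) (hmean' : ∀ t, ∫ ω, Z' t ω ∂P = μ')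
    -- arm k is separated from arm k' by at least Δ
    (hgap : μ ≤ μ' - Δ)
    (Bsel Bsel' : ℕ → Ω → ℝ)
    (hB01 : ∀ t ω, Bsel t ω = 0 ∨ Bsel t ω = 1)
    (hB01' : ∀ t ω, Bsel' t ω = 0 ∨ Bsel' t ω = 1)
    (hBm : ∀ t, Measurable[(MeasureTheory.Filtration.natural _ hpm) (t - 1)] (Bsel t))
    (hBm' : ∀ t, Measurable[(MeasureTheory.Filtration.natural _ hpm) (t - 1)] (Bsel' t))
    (ε : ℝ) (hε : 0 < ε)
    (Λ : Ω → Set ℕ) (Λs : ℕ → Ω → Set ℕ)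
    (hsub : ∀ ω, Λ ω ⊆ ⋃ s ∈ Set.Ici 1, Λs s ω)
    (hbig : ∀ s : ℕ, ∀ ω, ∀ n ∈ Λs s ω, ε * (s : ℝ) ≤ ∑ t ∈ Finset.Icc 1 n, Bsel t ω)
    (hbig' : ∀ s : ℕ, ∀ ω, ∀ n ∈ Λs s ω, ε * (s : ℝ) ≤ ∑ t ∈ Finset.Icc 1 n, Bsel' t ω)
    (hone : ∀ s ω, (Λs s ω).Subsingleton)
    (hmeasΛ : ∀ s n,
      MeasurableSet[(MeasureTheory.Filtration.natural _ hpm) n] {ω | n ∈ Λs s ω}) :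
    ∫⁻ ω, ∑' n : ℕ,
        (if n ∈ Λ ω ∧
            (if 0 < ∑ t ∈ Finset.Icc 1 n, Bsel' t ω then
              (∑ t ∈ Finset.Icc 1 n, Bsel' t ω * Z' t ω) /
                (∑ t ∈ Finset.Icc 1 n, Bsel' t ω)
            else 0) <
            (if 0 < ∑ t ∈ Finset.Icc 1 n, Bsel t ω then
              (∑ t ∈ Finset.Icc 1 n, Bsel t ω * Z t ω) /
                (∑ t ∈ Finset.Icc 1 n, Bsel t ω)
            else 0)
          then (1 : ℝ≥0∞) else 0) ∂P
      ≤ ENNReal.ofReal (8 / (ε * Δ ^ 2)) := by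
  set F := Filtration.natural _ hpm
  have hZ : ∀ t, Measurable[F t] (Z t) ∧ Measurable[F t] (Z' t) := fun t =>
    ⟨(Filtration.stronglyAdapted_natural hpm t).measurable.fst,
      (Filtration.stronglyAdapted_natural hpm t).measurable.snd⟩
  have hind := fun t => indep_natural_comap_of_iIndepFun hpm hindep (Nat.lt_succ_self t)
  set A : ℕ → ℕ → Set Ω := fun s n => {ω | n ∈ Λs s ω}
  have hdisj : ∀ s, Pairwise (Disjoint on A s) := fun s n n' hnn' =>
    Set.disjoint_left.2 fun ω h h' => hnn' (hone s ω h h')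
  set D : ℕ → Set Ω := fun n =>
    {ω | Δ / 2 * ∑ t ∈ Icc 1 n, Bsel t ω ≤ ∑ t ∈ Icc 1 n, Bsel t ω * (Z t ω - μ)}
  set D' : ℕ → Set Ω := fun n =>
    {ω | Δ / 2 * ∑ t ∈ Icc 1 n, Bsel' t ω ≤ ∑ t ∈ Icc 1 n, Bsel' t ω * (μ' - Z' t ω)}
  have hrate : ∀ s : ℕ, 2 * (Δ / 2) ^ 2 * (ε * s) = ε * Δ ^ 2 / 2 * s := fun s => by ring
  have hdev : ∀ s, ∑' n, P (A s n ∩ D n) ≤ ENNReal.ofReal (exp (-(ε * Δ ^ 2 / 2 * s))) :=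
    fun s => hrate s ▸ tsum_measure_inter_upper_deviation_le_of_mem_unitInterval
      (fun t => (hZ t).1) hZb hmean (fun t => hind t false) hB01 hBm (hmeasΛ s) (hdisj s)
      (by positivity) (fun n ω hω => hbig s ω n hω)
  have hdev' : ∀ s, ∑' n, P (A s n ∩ D' n) ≤ ENNReal.ofReal (exp (-(ε * Δ ^ 2 / 2 * s))) :=
    fun s => hrate s ▸ tsum_measure_inter_lower_deviation_le_of_mem_unitInterval
      (fun t => (hZ t).2) hZb' hmean' (fun t => hind t true) hB01' hBm' (hmeasΛ s) (hdisj s)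
      (by positivity) (fun n ω hω => hbig' s ω n hω)
  have hmeas : ∀ k n, MeasurableSet (A (k + 1) n ∩ (D n ∪ D' n)) := by
    have hB := fun t => (hBm t).mono (F.le _) le_rfl
    have hB' := fun t => (hBm' t).mono (F.le _) le_rfl
    have hZ := fun t => (hpm t).measurable.fst
    have hZ' := fun t => (hpm t).measurable.snd
    exact fun k n => (F.le n _ (hmeasΛ _ n)).inter
      ((measurableSet_le (by fun_prop) (by fun_prop)).union
        (measurableSet_le (by fun_prop) (by fun_prop)))
  refine (lintegral_tsum_ite_le_tsum_tsum_measure hmeas ?_).trans ?_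
  · rintro n ω ⟨hn, hlt⟩
    obtain ⟨s, hs, hns⟩ := Set.mem_iUnion₂.1 (hsub ω hn)
    obtain ⟨k, rfl⟩ := Nat.exists_eq_add_of_le' hs
    have hpos := mul_pos hε (Nat.cast_pos.2 (Nat.succ_pos k))
    have hT := hpos.trans_le (hbig _ ω n hns)
    have hT' := hpos.trans_le (hbig' _ ω n hns)
    rw [if_pos hT, if_pos hT'] at hlt
    exact ⟨k, hns, deviation_of_div_lt_div _ (by linarith) hT hT' hlt⟩
  calc ∑' k, ∑' n, P (A (k + 1) n ∩ (D n ∪ D' n))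
      ≤ ∑' k : ℕ, 2 * ENNReal.ofReal (exp (-(ε * Δ ^ 2 / 2 * ↑(k + 1)))) :=
        ENNReal.tsum_le_tsum fun k => (tsum_measure_inter_union_le _ _ _).trans
          ((add_le_add (hdev _) (hdev' _)).trans_eq (two_mul _).symm)
    _ = 2 * ∑' k : ℕ, ENNReal.ofReal (exp (-(ε * Δ ^ 2 / 2 * ↑(k + 1)))) := ENNReal.tsum_mul_left
    _ ≤ 2 * ENNReal.ofReal (1 / (ε * Δ ^ 2 / 2)) := by
        gcongr
        exact tsum_ofReal_exp_neg_mul_succ_le (by positivity)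
    _ ≤ ENNReal.ofReal (8 / (ε * Δ ^ 2)) := by
        rw [← ENNReal.ofReal_ofNat 2, ← ENNReal.ofReal_mul zero_le_two, div_div_eq_mul_div,
          ← mul_div_assoc]
        exact ENNReal.ofReal_le_ofReal (by gcongr; norm_num)
end

section
/- For constants c_k ≥ 0 indexed by the neighbors k of the optimal arm k*, the constraint inf_{λ ∈ B_k(θ)} Σ_{l ≠ k*} c_l·KL(θ_l, λ_l) ≥ 1 is equivalent to c_k·I_min(θ_k, μ(θ_{k*})) ≥ 1; in particular inf_{λ ∈ B_k(θ)} Σ_{l ≠ k*} c_l·KL(θ_l, λ_l) = c_k·I_min(θ_k, μ(θ_{k*})). -/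
/-! The lower bound holds term by term: every summand is nonnegative, and the `k`-th one is at
least `c k * I_min` because `λ k` is a competitor in the definition of `I_min`. Conversely,
changing only the `k`-th coordinate of `θ` to a near-minimiser `x` of `I_min` gives a bad
parameter whose sum is `c k * KL (θ k) x`, since all other summands are `KL a a = 0`. -/

open Finset

theorem isGLB_of_forall_le_add {α : Type*} [LinearOrder α] [DenselyOrdered α] [AddMonoid α]
    [ExistsAddOfLE α] [AddLeftReflectLT α] {s : Set α} {b : α} (hb : ∀ a ∈ s, b ≤ a)
    (h : ∀ ε > 0, ∃ a ∈ s, a ≤ b + ε) : IsGLB s b :=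
  ⟨hb, fun _ ha => le_of_forall_pos_le_add fun ε hε =>
    let ⟨_, hs, hle⟩ := h ε hε
    (ha hs).trans hle⟩

theorem exists_mul_le_mul_add {α : Type*} {P : α → Prop} {g : α → ℝ} {b c : ℝ} (hc : 0 ≤ c)
    (h : ∀ ε > 0, ∃ x, P x ∧ g x ≤ b + ε) : ∀ ε > 0, ∃ x, P x ∧ c * g x ≤ c * b + ε := by
  intro ε hε
  obtain ⟨x, hx, hle⟩ := h (ε / (c + 1)) (by positivity)
  refine ⟨x, hx, ?_⟩
  calc c * g x ≤ c * (b + ε / (c + 1)) := mul_le_mul_of_nonneg_left hle hc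
    _ = c * b + c / (c + 1) * ε := by ring
    _ ≤ c * b + 1 * ε := by
        gcongr
        exact (div_le_one (by positivity)).2 (by linarith)
    _ = c * b + ε := by rw [one_mul]

theorem sum_mul_update_eq_of_self_eq_zero {ι α : Type*} [DecidableEq ι] {s : Finset ι}
    (D : α → α → ℝ) (hD : ∀ a, D a a = 0) (c : ι → ℝ) (θ : ι → α) {k : ι} (hk : k ∈ s) (x : α) :
    ∑ l ∈ s, c l * D (θ l) (Function.update θ k x l) = c k * D (θ k) x := by
  rw [sum_eq_single_of_mem k hk fun l _ hlk => by rw [Function.update_of_ne hlk, hD, mul_zero],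
    Function.update_self]

theorem stmt_14 {K : ℕ} (μf : ℝ → ℝ) (KL : ℝ → ℝ → ℝ)
    (hKLnn : ∀ a b, 0 ≤ KL a b) (hKLself : ∀ a, KL a a = 0)
    (θ : Fin K → ℝ) (kstar k : Fin K) (hk : k ≠ kstar)
    (c : Fin K → ℝ) (hc : ∀ l, 0 ≤ c l)
    (ΘG : Set (Fin K → ℝ))
    (hupdate : ∀ x : ℝ, μf (θ kstar) < μf x → Function.update θ k x ∈ ΘG)
    (Bk : Set (Fin K → ℝ))
    (hBk : Bk = {lam | lam ∈ ΘG ∧ lam kstar = θ kstar ∧ μf (lam kstar) < μf (lam k)})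
    (hcont : ∀ ε > (0 : ℝ), ∃ x, μf (θ kstar) < μf x ∧
      KL (θ k) x ≤ sInf {v | ∃ x', μf (θ kstar) ≤ μf x' ∧ v = KL (θ k) x'} + ε) :
    sInf {v | ∃ lam ∈ Bk, v = ∑ l ∈ Finset.univ.erase kstar, c l * KL (θ l) (lam l)}
        = c k * sInf {v | ∃ x, μf (θ kstar) ≤ μf x ∧ v = KL (θ k) x} ∧
    ((∀ lam ∈ Bk, 1 ≤ ∑ l ∈ Finset.univ.erase kstar, c l * KL (θ l) (lam l)) ↔
      1 ≤ c k * sInf {v | ∃ x, μf (θ kstar) ≤ μf x ∧ v = KL (θ k) x}) := by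
  set I := sInf {v | ∃ x, μf (θ kstar) ≤ μf x ∧ v = KL (θ k) x}
  set F := fun lam : Fin K → ℝ => ∑ l ∈ univ.erase kstar, c l * KL (θ l) (lam l)
  have hkmem : k ∈ univ.erase kstar := mem_erase.2 ⟨hk, mem_univ k⟩
  have hI_le : ∀ x, μf (θ kstar) ≤ μf x → I ≤ KL (θ k) x := fun x hx =>
    csInf_le ⟨0, by rintro _ ⟨_, _, rfl⟩; exact hKLnn _ _⟩ ⟨x, hx, rfl⟩
  have hlower : ∀ lam ∈ Bk, c k * I ≤ F lam := by
    rintro lam hlam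
    obtain ⟨-, hlam_kstar, hlam_k⟩ := hBk ▸ hlam
    calc c k * I ≤ c k * KL (θ k) (lam k) :=
          mul_le_mul_of_nonneg_left (hI_le _ (hlam_kstar ▸ hlam_k.le)) (hc k)
      _ ≤ F lam := single_le_sum (fun l _ => mul_nonneg (hc l) (hKLnn _ _)) hkmem
  have hupper : ∀ ε > 0, ∃ lam ∈ Bk, F lam ≤ c k * I + ε := by
    intro ε hε
    obtain ⟨x, hx, hle⟩ := exists_mul_le_mul_add (hc k) hcont ε hε
    have hkstar : Function.update θ k x kstar = θ kstar := Function.update_of_ne hk.symm x θ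
    refine ⟨Function.update θ k x, hBk ▸ ⟨hupdate x hx, hkstar, ?_⟩, ?_⟩
    · rwa [hkstar, Function.update_self]
    · exact (sum_mul_update_eq_of_self_eq_zero KL hKLself c θ hkmem x).trans_le hle
  have hglb : IsGLB {v | ∃ lam ∈ Bk, v = F lam} (c k * I) :=
    isGLB_of_forall_le_add (by rintro _ ⟨lam, hlam, rfl⟩; exact hlower lam hlam)
      fun ε hε => let ⟨lam, hlam, hle⟩ := hupper ε hε; ⟨F lam, ⟨lam, hlam, rfl⟩, hle⟩
  obtain ⟨lam, hlam, -⟩ := hupper 1 one_pos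
  refine ⟨hglb.csInf_eq ⟨F lam, lam, hlam, rfl⟩, ?_⟩
  rw [le_isGLB_iff hglb]
  exact ⟨fun h _ ⟨lam, hlam, hv⟩ => hv ▸ h lam hlam, fun h lam hlam => h ⟨lam, hlam, rfl⟩⟩
end
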